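/- If a subspace X of a metric space Ω has Nagata dimension ≤ δ in Ω on scale s, then the closure of X in Ω also has Nagata dimension ≤ δ in Ω on scale s. -/

import Mathlib

/-!
Every finite family of balls centred in `closure X` contains a disconnected covering subfamily
(greedily, largest radius first), so it suffices to bound the multiplicity of disconnected
families. Disconnectedness of a finite family is a strict, hence open, condition: moving each
centre by less than `ε` into `X` and enlarging each radius by `2ε` keeps the family disconnected,
of admissible radii, and containing every point the original balls contained. The hypothesis on
`X` bounds such families, since a disconnected family has no proper covering subfamily.
-/

open Metric ENNReal Filter Topology

/-- Multiplicity `≤ m` for a finite family of closed balls. -/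
def BallMultLE {Ω : Type*} [MetricSpace Ω] (γ : Finset (Ω × ℝ)) (m : ℕ) : Prop :=
  ∀ y : Ω, (γ.filter fun p => dist y p.1 ≤ p.2).card ≤ m

/-- A subspace `X` of `Ω` has Nagata dimension `≤ δ` in `Ω` on the scale `s`. -/
def NagataDimOnLE {Ω : Type*} [MetricSpace Ω] (X : Set Ω) (δ : ℕ) (s : ℝ≥0∞) : Prop :=
  ∀ γ : Finset (Ω × ℝ), (∀ p ∈ γ, p.1 ∈ X ∧ 0 ≤ p.2 ∧ ENNReal.ofReal p.2 < s) →
    ∃ γ' ⊆ γ, BallMultLE γ' (δ + 1) ∧ ∀ p ∈ γ, ∃ q ∈ γ', dist p.1 q.1 ≤ q.2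

section

variable {Ω : Type*} [MetricSpace Ω]

def BallsDisconnected (γ : Finset (Ω × ℝ)) : Prop :=
  ∀ p ∈ γ, ∀ q ∈ γ, p ≠ q → q.2 < dist p.1 q.1

lemma BallsDisconnected.mono {γ γ' : Finset (Ω × ℝ)} (hd : BallsDisconnected γ) (h : γ' ⊆ γ) :
    BallsDisconnected γ' :=
  fun p hp q hq hne => hd p (h hp) q (h hq) hne

lemma exists_ballsDisconnected_covering_subfamily (γ : Finset (Ω × ℝ))
    (hr : ∀ p ∈ γ, 0 ≤ p.2) :
    ∃ γ' ⊆ γ, BallsDisconnected γ' ∧ ∀ p ∈ γ, ∃ q ∈ γ', dist p.1 q.1 ≤ q.2 := by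
  classical
  induction γ using Finset.strongInduction with
  | _ γ ih =>
    rcases γ.eq_empty_or_nonempty with rfl | hne
    · exact ⟨∅, subset_rfl, by simp [BallsDisconnected], by simp⟩
    obtain ⟨p, hp, hmax⟩ := γ.exists_max_image Prod.snd hne
    set rest := γ.filter fun q => ¬ dist q.1 p.1 ≤ p.2
    have hrest : rest ⊂ γ := Finset.filter_ssubset.2 ⟨p, hp, by simp [hr p hp]⟩
    obtain ⟨γ₁, hγ₁, hd₁, hcov₁⟩ := ih rest hrest fun q hq => hr q (Finset.mem_of_mem_filter q hq)
    have hfar : ∀ q ∈ γ₁, q ∈ γ ∧ p.2 < dist q.1 p.1 := fun q hq => by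
      simpa [rest] using hγ₁ hq
    refine ⟨insert p γ₁, Finset.insert_subset hp (hγ₁.trans (Finset.filter_subset _ _)), ?_, ?_⟩
    · intro a ha b hb hab
      rcases Finset.mem_insert.1 ha with rfl | ha₁ <;> rcases Finset.mem_insert.1 hb with rfl | hb₁
      · exact absurd rfl hab
      · obtain ⟨hbγ, hbfar⟩ := hfar b hb₁
        exact (hmax b hbγ).trans_lt (dist_comm a.1 b.1 ▸ hbfar)
      · exact (hfar a ha₁).2
      · exact hd₁ a ha₁ b hb₁ hab
    · intro q hq
      by_cases hqp : dist q.1 p.1 ≤ p.2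
      · exact ⟨p, Finset.mem_insert_self _ _, hqp⟩
      · obtain ⟨r, hr₁, hqr⟩ := hcov₁ q (Finset.mem_filter.2 ⟨hq, hqp⟩)
        exact ⟨r, Finset.mem_insert_of_mem hr₁, hqr⟩

lemma NagataDimOnLE.card_le_of_ballsDisconnected {X : Set Ω} {δ : ℕ} {s : ℝ≥0∞}
    (h : NagataDimOnLE X δ s) {γ : Finset (Ω × ℝ)}
    (hγ : ∀ p ∈ γ, p.1 ∈ X ∧ 0 ≤ p.2 ∧ ENNReal.ofReal p.2 < s) (hd : BallsDisconnected γ)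
    {y : Ω} (hy : ∀ p ∈ γ, dist y p.1 ≤ p.2) :
    γ.card ≤ δ + 1 := by
  obtain ⟨γ', hsub, hmult, hcov⟩ := h γ hγ
  have hγ' : γ' = γ := by
    refine hsub.antisymm fun p hp => ?_
    obtain ⟨q, hq, hpq⟩ := hcov p hp
    obtain rfl | hne := eq_or_ne p q
    · exact hq
    · exact absurd hpq (hd p hp q (hsub hq) hne).not_ge
  simpa [hγ', Finset.filter_true_of_mem hy] using hmult y

lemma BallsDisconnected.exists_pos_margin {γ : Finset (Ω × ℝ)} {s : ℝ≥0∞}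
    (hd : BallsDisconnected γ) (hs : ∀ p ∈ γ, ENNReal.ofReal p.2 < s) :
    ∃ ε > 0, (∀ p ∈ γ, ENNReal.ofReal (p.2 + 2 * ε) < s) ∧
      ∀ p ∈ γ, ∀ q ∈ γ, p ≠ q → q.2 + 4 * ε < dist p.1 q.1 := by
  have hscale : ∀ᶠ ε in 𝓝 (0 : ℝ), ∀ p ∈ γ, ENNReal.ofReal (p.2 + 2 * ε) < s := by
    refine (eventually_all_finset γ).2 fun p hp => ?_
    refine ContinuousAt.eventually_lt
      (ENNReal.continuous_ofReal.comp (by fun_prop)).continuousAt continuousAt_const ?_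
    simpa using hs p hp
  have hsep : ∀ᶠ ε in 𝓝 (0 : ℝ), ∀ p ∈ γ, ∀ q ∈ γ, p ≠ q → q.2 + 4 * ε < dist p.1 q.1 := by
    refine (eventually_all_finset γ).2 fun p hp => ?_
    refine (eventually_all_finset γ).2 fun q hq => ?_
    refine eventually_imp_distrib_left.2 fun hne => ?_
    refine ContinuousAt.eventually_lt (by fun_prop) continuousAt_const ?_
    simpa using hd p hp q hq hne
  exact (hscale.and hsep).exists_gt

lemma NagataDimOnLE.card_le_of_ballsDisconnected_closure {X : Set Ω} {δ : ℕ} {s : ℝ≥0∞}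
    (h : NagataDimOnLE X δ s) {γ : Finset (Ω × ℝ)}
    (hγ : ∀ p ∈ γ, p.1 ∈ closure X ∧ 0 ≤ p.2 ∧ ENNReal.ofReal p.2 < s)
    (hd : BallsDisconnected γ) {y : Ω} (hy : ∀ p ∈ γ, dist y p.1 ≤ p.2) :
    γ.card ≤ δ + 1 := by
  classical
  obtain rfl | ⟨p₀, -⟩ := γ.eq_empty_or_nonempty
  · simp
  have : Nonempty Ω := ⟨p₀.1⟩
  obtain ⟨ε, hε, hscale, hsep⟩ := hd.exists_pos_margin fun p hp => (hγ p hp).2.2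
  have hnear : ∀ p ∈ γ, ∃ x ∈ X, dist p.1 x < ε := fun p hp =>
    mem_closure_iff.1 (hγ p hp).1 ε hε
  choose! a haX hap using hnear
  set F : Ω × ℝ → Ω × ℝ := fun p => (a p, p.2 + 2 * ε)
  have hsepF : ∀ p ∈ γ, ∀ q ∈ γ, p ≠ q → q.2 + 2 * ε < dist (a p) (a q) := by
    intro p hp q hq hne
    have := dist_triangle4 p.1 (a p) (a q) q.1
    linarith [hsep p hp q hq hne, hap p hp, dist_comm q.1 (a q) ▸ hap q hq]
  have hinj : Set.InjOn F γ := by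
    intro p hp q hq hpq
    by_contra hne
    have := hsepF p hp q hq hne
    rw [show a p = a q from congrArg Prod.fst hpq, dist_self] at this
    linarith [(hγ q hq).2.1]
  rw [← Finset.card_image_of_injOn hinj]
  refine h.card_le_of_ballsDisconnected (y := y) ?_ ?_ ?_
  · simp only [Finset.mem_image, forall_exists_index, and_imp, forall_apply_eq_imp_iff₂]
    exact fun p hp => ⟨haX p hp, by linarith [(hγ p hp).2.1], hscale p hp⟩
  · simp only [BallsDisconnected, Finset.mem_image, forall_exists_index, and_imp,
      forall_apply_eq_imp_iff₂]
    exact fun p hp q hq hne => hsepF p hp q hq fun hpq => hne (hpq ▸ rfl)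
  · simp only [Finset.mem_image, forall_exists_index, and_imp, forall_apply_eq_imp_iff₂]
    exact fun p hp => by linarith [dist_triangle y p.1 (a p), hy p hp, hap p hp]

end

/-- If `X` has Nagata dimension `≤ δ` in `Ω` on scale `s`, then so does the
closure of `X` in `Ω`. -/
theorem nagataDimOnLE_closure {Ω : Type*} [MetricSpace Ω] (X : Set Ω) (δ : ℕ)
    (s : ℝ≥0∞) (h : NagataDimOnLE X δ s) : NagataDimOnLE (closure X) δ s := by
  intro γ hγ
  obtain ⟨γ', hsub, hd, hcov⟩ :=
    exists_ballsDisconnected_covering_subfamily γ fun p hp => (hγ p hp).2.1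
  refine ⟨γ', hsub, fun y => ?_, hcov⟩
  have hfilter : γ'.filter (fun p => dist y p.1 ≤ p.2) ⊆ γ' := Finset.filter_subset _ _
  exact h.card_le_of_ballsDisconnected_closure (fun p hp => hγ p (hsub (hfilter hp)))
    (hd.mono hfilter) fun p hp => (Finset.mem_filter.1 hp).2
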